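/- Let R be the free noncommutative F-algebra on two generators X₁, X₂ over F = ℚ(A), with the endomorphisms T₁, T₂ and the two-sided ideal J as above. Then for k ∈ {1,2}, the element (T₁T₂T₁)²(X_k) − X_k = T₁T₂T₁T₁T₂T₁(X_k) − X_k belongs to J; that is, the relation (T₁T₂T₁)²(X_k) = X_k holds in the quotient algebra B = R/J (the last two defining relations of the paper's presentation are implied by the first two). -/

import Mathlib

/-- `F = ℚ(A)`, the field of rational functions in one variable over `ℚ`. -/
noncomputable abbrev F : Type := RatFunc ℚ

/-- The variable `A ∈ ℚ(A)`. -/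
noncomputable def A : F := RatFunc.X

/-- The deformed bracket `[x,y]_A = A·(x*y) − A⁻¹·(y*x)` in an `F`-algebra. -/
noncomputable def brA {S : Type*} [Ring S] [Algebra F S] (x y : S) : S :=
  A • (x * y) - A⁻¹ • (y * x)

/-- `R`, the free noncommutative `F`-algebra on two generators. -/
noncomputable abbrev R : Type := FreeAlgebra F (Fin 2)

/-- The first generator `X₁`. -/
noncomputable def X1 : R := FreeAlgebra.ι F 0

/-- The second generator `X₂`. -/
noncomputable def X2 : R := FreeAlgebra.ι F 1

/-- The generators as a function on `Fin 2`. -/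
noncomputable def X : Fin 2 → R := ![X1, X2]

/-- `T₁ : X₁ ↦ X₁, X₂ ↦ [X₁,X₂]_A`. -/
noncomputable def T1 : R →ₐ[F] R := FreeAlgebra.lift F ![X1, brA X1 X2]

/-- `T₁⁻ : X₁ ↦ X₁, X₂ ↦ [X₂,X₁]_A`. -/
noncomputable def T1inv : R →ₐ[F] R := FreeAlgebra.lift F ![X1, brA X2 X1]

/-- `T₂ : X₁ ↦ [X₂,X₁]_A, X₂ ↦ X₂`. -/
noncomputable def T2 : R →ₐ[F] R := FreeAlgebra.lift F ![brA X2 X1, X2]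

/-- `T₂⁻ : X₁ ↦ [X₁,X₂]_A, X₂ ↦ X₂`. -/
noncomputable def T2inv : R →ₐ[F] R := FreeAlgebra.lift F ![brA X1 X2, X2]

/-- The two-sided ideal `J` generated by `[[X₁,X₂]_A, X₁]_A − X₂` and
`[[X₂,X₁]_A, X₂]_A − X₁`. -/
noncomputable def J : TwoSidedIdeal R :=
  TwoSidedIdeal.span {brA (brA X1 X2) X1 - X2, brA (brA X2 X1) X2 - X1}

/-!
The ideal `J` is stable under `T₁` and `T₂`: each `Tᵢ` sends both defining relators into `J`,
by two identities valid for any twisted commutator. Modulo `J`, `τ = T₁T₂T₁` swaps `X₁` and `X₂`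
(`τ X₁ - X₂` is the first relator itself), so `τ²` fixes both generators modulo `J`.
-/

/-- `brA` is the case `u = A`, `v = A⁻¹`. -/
noncomputable def twistedCommutator {K S : Type*} [CommRing K] [Ring S] [Algebra K S]
    (u v : K) (x y : S) : S :=
  u • (x * y) - v • (y * x)

section TwistedCommutator

variable {K S : Type*} [CommRing K] [Ring S] [Algebra K S] (u v : K)

local notation "⟦" x ", " y "⟧" => twistedCommutator u v x y

lemma twistedCommutator_triple_sub (a b : S) :
    ⟦⟦a, ⟦a, b⟧⟧, a⟧ - ⟦a, b⟧ = ⟦a, ⟦⟦a, b⟧, a⟧ - b⟧ := by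
  simp only [twistedCommutator, smul_sub, smul_smul, mul_sub, sub_mul, smul_mul_assoc,
    mul_smul_comm, mul_assoc]
  match_scalars <;> ring

lemma twistedCommutator_quadruple_sub (a b : S) :
    ⟦⟦⟦a, b⟧, a⟧, ⟦a, b⟧⟧ - a = (⟦⟦b, a⟧, b⟧ - a) + ⟦⟦⟦a, b⟧, a⟧ - b, ⟦a, b⟧⟧ := by
  simp only [twistedCommutator, smul_sub, smul_smul, mul_sub, sub_mul, smul_mul_assoc,
    mul_smul_comm, mul_assoc]
  match_scalars <;> ring

variable {I : TwoSidedIdeal S}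

lemma twistedCommutator_mem_of_left_mem {x : S} (hx : x ∈ I) (y : S) : ⟦x, y⟧ ∈ I := by
  rw [twistedCommutator, Algebra.smul_def, Algebra.smul_def]
  exact I.sub_mem (I.mul_mem_left _ _ (I.mul_mem_right _ _ hx))
    (I.mul_mem_left _ _ (I.mul_mem_left _ _ hx))

lemma twistedCommutator_mem_of_right_mem (x : S) {y : S} (hy : y ∈ I) : ⟦x, y⟧ ∈ I := by
  rw [twistedCommutator, Algebra.smul_def, Algebra.smul_def]
  exact I.sub_mem (I.mul_mem_left _ _ (I.mul_mem_left _ _ hy))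
    (I.mul_mem_left _ _ (I.mul_mem_right _ _ hy))

end TwistedCommutator

lemma AlgHom.map_brA {S S' : Type*} [Ring S] [Algebra F S] [Ring S'] [Algebra F S']
    (φ : S →ₐ[F] S') (x y : S) : φ (brA x y) = brA (φ x) (φ y) := by
  simp [brA]

lemma map_map_sub_mem_of_swap {G σ M : Type*} [AddGroup G] [SetLike σ G] [AddSubgroupClass σ G]
    [FunLike M G G] [AddMonoidHomClass M G G] {H : σ} {f : M} (hf : ∀ x ∈ H, f x ∈ H)
    {a b : G} (hab : f a - b ∈ H) (hba : f b - a ∈ H) : f (f a) - a ∈ H := by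
  have : f (f a) - a = f (f a - b) + (f b - a) := by simp [sub_add_sub_cancel]
  rw [this]
  exact add_mem (hf _ hab) hba

noncomputable def rel₁ : R := brA (brA X1 X2) X1 - X2

noncomputable def rel₂ : R := brA (brA X2 X1) X2 - X1

lemma rel₁_mem : rel₁ ∈ J := TwoSidedIdeal.subset_span (Set.mem_insert _ _)

lemma rel₂_mem : rel₂ ∈ J := TwoSidedIdeal.subset_span (Set.mem_insert_of_mem _ rfl)

lemma J_le_comap_of_rel_mem {φ : R →ₐ[F] R} (h₁ : φ rel₁ ∈ J) (h₂ : φ rel₂ ∈ J) :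
    J ≤ TwoSidedIdeal.comap φ J := by
  refine TwoSidedIdeal.span_le.mpr ?_
  rintro _ (rfl | rfl) <;> rw [SetLike.mem_coe, TwoSidedIdeal.mem_comap]
  exacts [h₁, h₂]

@[simp] lemma T1_X1 : T1 X1 = X1 := by simp [T1, X1]

@[simp] lemma T1_X2 : T1 X2 = brA X1 X2 := by simp [T1, X2]

@[simp] lemma T2_X1 : T2 X1 = brA X2 X1 := by simp [T2, X1]

@[simp] lemma T2_X2 : T2 X2 = X2 := by simp [T2, X2]

lemma T1_rel₁ : T1 rel₁ = brA X1 rel₁ := by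
  simp only [rel₁, map_sub, AlgHom.map_brA, T1_X1, T1_X2]
  exact twistedCommutator_triple_sub A A⁻¹ X1 X2

lemma T1_rel₂ : T1 rel₂ = rel₂ + brA rel₁ (brA X1 X2) := by
  simp only [rel₁, rel₂, map_sub, AlgHom.map_brA, T1_X1, T1_X2]
  exact twistedCommutator_quadruple_sub A A⁻¹ X1 X2

lemma T2_rel₁ : T2 rel₁ = rel₁ + brA rel₂ (brA X2 X1) := by
  simp only [rel₁, rel₂, map_sub, AlgHom.map_brA, T2_X1, T2_X2]
  exact twistedCommutator_quadruple_sub A A⁻¹ X2 X1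

lemma T2_rel₂ : T2 rel₂ = brA X2 rel₂ := by
  simp only [rel₂, map_sub, AlgHom.map_brA, T2_X1, T2_X2]
  exact twistedCommutator_triple_sub A A⁻¹ X2 X1

lemma T1_mem_of_mem {x : R} (hx : x ∈ J) : T1 x ∈ J := by
  refine (TwoSidedIdeal.mem_comap _).mp (J_le_comap_of_rel_mem ?_ ?_ hx)
  · rw [T1_rel₁]
    exact twistedCommutator_mem_of_right_mem _ _ _ rel₁_mem
  · rw [T1_rel₂]
    exact add_mem rel₂_mem (twistedCommutator_mem_of_left_mem _ _ rel₁_mem _)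

lemma T2_mem_of_mem {x : R} (hx : x ∈ J) : T2 x ∈ J := by
  refine (TwoSidedIdeal.mem_comap _).mp (J_le_comap_of_rel_mem ?_ ?_ hx)
  · rw [T2_rel₁]
    exact add_mem rel₁_mem (twistedCommutator_mem_of_left_mem _ _ rel₂_mem _)
  · rw [T2_rel₂]
    exact twistedCommutator_mem_of_right_mem _ _ _ rel₂_mem

lemma T1_T2_T1_X1 : T1 (T2 (T1 X1)) = X2 + rel₁ := by
  simp [AlgHom.map_brA, rel₁]

lemma T1_T2_T1_X2 : T1 (T2 (T1 X2)) = X1 + T1 rel₂ := by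
  simp [AlgHom.map_brA, rel₂]

/-- The relation `(T₁T₂T₁)²(X_k) = X_k` holds in the quotient `B = R/J`. -/
theorem central_relation_mem (k : Fin 2) :
    T1 (T2 (T1 (T1 (T2 (T1 (X k)))))) - X k ∈ J := by
  let τ : R →ₐ[F] R := T1.comp (T2.comp T1)
  have hτ : ∀ x ∈ J, τ x ∈ J := fun _ hx => T1_mem_of_mem (T2_mem_of_mem (T1_mem_of_mem hx))
  have h₁₂ : τ X1 - X2 ∈ J := by
    show T1 (T2 (T1 X1)) - X2 ∈ J
    rw [T1_T2_T1_X1, add_sub_cancel_left]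
    exact rel₁_mem
  have h₂₁ : τ X2 - X1 ∈ J := by
    show T1 (T2 (T1 X2)) - X1 ∈ J
    rw [T1_T2_T1_X2, add_sub_cancel_left]
    exact T1_mem_of_mem rel₂_mem
  fin_cases k
  exacts [map_map_sub_mem_of_swap hτ h₁₂ h₂₁, map_map_sub_mem_of_swap hτ h₂₁ h₁₂]
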